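/- arXiv:0804.0570 — 2 statements merged into one kernel-verified Lean document; each statement's English description precedes it below -/
import Mathlib

section
/- Let G be a graph with a fat crown decomposition (H, C, R). Then G has a P2-packing of size k if and only if G − H − C has a P2-packing of size k − |H|. -/
/-!
A P2 that leaves `R` must meet `H`: from `C` it can only step into `C ∪ H`, and a P2 inside `C`
would need a vertex with two neighbours in `C`, while `G[C]` is a matching. Since the paths of a
packing are vertex-disjoint, at most `|H|` of them leave `R`. Conversely, every `h ∈ H`, its
`M`-partner `c ∈ C` and the other end of the `K₂` through `c` form a P2; as no two `M`-matched
vertices share a `K₂`, these `|H|` paths are disjoint, and they avoid every path inside `R`.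
-/

open Finset

def P2Verts {V : Type*} [DecidableEq V] (p : V × V × V) : Finset V := {p.1, p.2.1, p.2.2}

def IsP2 {V : Type*} (G : SimpleGraph V) (p : V × V × V) : Prop :=
  G.Adj p.1 p.2.1 ∧ G.Adj p.2.1 p.2.2 ∧ p.1 ≠ p.2.2

def IsP2Packing {V : Type*} [DecidableEq V] (G : SimpleGraph V) (P : Finset (V × V × V)) : Prop :=
  (∀ p ∈ P, IsP2 G p) ∧
  ∀ p ∈ P, ∀ q ∈ P, p ≠ q → Disjoint (P2Verts p) (P2Verts q)

def PackVerts {V : Type*} [DecidableEq V] (P : Finset (V × V × V)) : Finset V :=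
  P.biUnion P2Verts

def IsMaximalP2Packing {V : Type*} [DecidableEq V] (G : SimpleGraph V)
    (P : Finset (V × V × V)) : Prop :=
  IsP2Packing G P ∧ ∀ q, IsP2 G q → ¬ Disjoint (P2Verts q) (PackVerts P)

def P2Edges {V : Type*} [DecidableEq V] (p : V × V × V) : Finset (Sym2 V) :=
  {s(p.1, p.2.1), s(p.2.1, p.2.2)}

/-- A double crown decomposition (H, C, R) of the vertex set of G. -/
structure IsDoubleCrown {V : Type*} [DecidableEq V] (G : SimpleGraph V)
    (H C R : Finset V) : Prop where
  cover : ∀ v : V, v ∈ H ∨ v ∈ C ∨ v ∈ R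
  dHC : Disjoint H C
  dHR : Disjoint H R
  dCR : Disjoint C R
  sep : ∀ c ∈ C, ∀ r ∈ R, ¬ G.Adj c r
  indep : ∀ a ∈ C, ∀ b ∈ C, ¬ G.Adj a b
  crown : ∃ C0 Cp Cpp : Finset V,
    C = C0 ∪ Cp ∪ Cpp ∧ Disjoint C0 Cp ∧ Disjoint C0 Cpp ∧ Disjoint Cp Cpp ∧
    Cp.card = H.card ∧ Cpp.card = H.card ∧
    (∃ f : {x // x ∈ Cp} ≃ {x // x ∈ H}, ∀ x, G.Adj x.1 (f x).1) ∧
    (∃ f : {x // x ∈ Cpp} ≃ {x // x ∈ H}, ∀ x, G.Adj x.1 (f x).1)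

/-- A fat crown decomposition (H, C, R) of the vertex set of G. -/
structure IsFatCrown {V : Type*} [DecidableEq V] (G : SimpleGraph V)
    (H C R : Finset V) : Prop where
  cover : ∀ v : V, v ∈ H ∨ v ∈ C ∨ v ∈ R
  dHC : Disjoint H C
  dHR : Disjoint H R
  dCR : Disjoint C R
  sep : ∀ c ∈ C, ∀ r ∈ R, ¬ G.Adj c r
  k2s : ∀ v ∈ C, ∃ w ∈ C, G.Adj v w ∧ ∀ u ∈ C, G.Adj v u → u = w
  matching : ∃ f : {x // x ∈ H} → V, Function.Injective f ∧
    (∀ h : {x // x ∈ H}, f h ∈ C ∧ G.Adj h.1 (f h)) ∧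
    (∀ h hp : {x // x ∈ H}, h ≠ hp → ¬ G.Adj (f h) (f hp))

section

variable {V : Type*} [DecidableEq V] {G : SimpleGraph V}

lemma mem_P2Verts {p : V × V × V} {v : V} : v ∈ P2Verts p ↔ v = p.1 ∨ v = p.2.1 ∨ v = p.2.2 := by
  simp [P2Verts]

lemma fst_mem_P2Verts (p : V × V × V) : p.1 ∈ P2Verts p := mem_P2Verts.2 (Or.inl rfl)

lemma disjoint_of_forall_disjoint_P2Verts {P Q : Finset (V × V × V)}
    (hPQ : ∀ p ∈ P, ∀ q ∈ Q, Disjoint (P2Verts p) (P2Verts q)) : Disjoint P Q :=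
  disjoint_left.2 fun p hp hq =>
    disjoint_left.1 (hPQ p hp p hq) (fst_mem_P2Verts p) (fst_mem_P2Verts p)

namespace IsP2Packing

lemma mono {P Q : Finset (V × V × V)} (hP : IsP2Packing G P) (hQP : Q ⊆ P) :
    IsP2Packing G Q :=
  ⟨fun p hp => hP.1 p (hQP hp), fun p hp q hq => hP.2 p (hQP hp) q (hQP hq)⟩

lemma exists_subset_card_eq {P : Finset (V × V × V)} (hP : IsP2Packing G P) {k : ℕ}
    (hk : k ≤ P.card) : ∃ Q ⊆ P, IsP2Packing G Q ∧ Q.card = k := by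
  obtain ⟨Q, hQP, hQ⟩ := Finset.exists_subset_card_eq hk
  exact ⟨Q, hQP, hP.mono hQP, hQ⟩

lemma card_le_of_forall_inter_nonempty {P : Finset (V × V × V)} (hP : IsP2Packing G P)
    {S : Finset V} (hS : ∀ p ∈ P, (P2Verts p ∩ S).Nonempty) : P.card ≤ S.card := by
  refine card_le_card_of_forall_subsingleton (fun p v => v ∈ P2Verts p) (fun p hp => ?_)
    (fun v _ => ?_)
  · obtain ⟨v, hv⟩ := hS p hp
    exact ⟨v, (mem_inter.1 hv).2, (mem_inter.1 hv).1⟩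
  · rintro p ⟨hp, hvp⟩ q ⟨hq, hvq⟩
    by_contra hpq
    exact disjoint_left.1 (hP.2 p hp q hq hpq) hvp hvq

lemma union {P Q : Finset (V × V × V)} (hP : IsP2Packing G P) (hQ : IsP2Packing G Q)
    (hPQ : ∀ p ∈ P, ∀ q ∈ Q, Disjoint (P2Verts p) (P2Verts q)) : IsP2Packing G (P ∪ Q) := by
  refine ⟨fun p hp => (mem_union.1 hp).elim (hP.1 p) (hQ.1 p), fun p hp q hq hpq => ?_⟩
  rcases mem_union.1 hp with hp | hp <;> rcases mem_union.1 hq with hq | hq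
  · exact hP.2 p hp q hq hpq
  · exact hPQ p hp q hq
  · exact (hPQ q hq p hp).symm
  · exact hQ.2 p hp q hq hpq

end IsP2Packing

lemma isP2Packing_image {ι : Type*} {s : Finset ι} {t : ι → V × V × V}
    (ht : ∀ i ∈ s, IsP2 G (t i))
    (hdisj : ∀ i ∈ s, ∀ j ∈ s, i ≠ j → Disjoint (P2Verts (t i)) (P2Verts (t j))) :
    IsP2Packing G (s.image t) := by
  refine ⟨forall_mem_image.2 ht, forall_mem_image.2 fun i hi => forall_mem_image.2 fun j hj => ?_⟩
  exact fun hij => hdisj i hi j hj fun h => hij (h ▸ rfl)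

namespace IsFatCrown

variable {H C R : Finset V} (hc : IsFatCrown G H C R)
include hc

lemma mem_of_adj_of_mem {c x : V} (hcC : c ∈ C) (hadj : G.Adj c x) (hxH : x ∉ H) : x ∈ C := by
  rcases hc.cover x with h | h | h
  · exact absurd h hxH
  · exact h
  · exact absurd hadj (hc.sep c hcC x h)

lemma not_isP2_of_mem {p : V × V × V} (hp : IsP2 G p) (h1 : p.1 ∈ C) (h2 : p.2.1 ∈ C)
    (h3 : p.2.2 ∈ C) : False := by
  obtain ⟨w, -, -, huniq⟩ := hc.k2s _ h2
  exact hp.2.2 ((huniq _ h1 hp.1.symm).trans (huniq _ h3 hp.2.1).symm)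

lemma P2Verts_inter_nonempty {p : V × V × V} (hp : IsP2 G p) (hpR : ¬ P2Verts p ⊆ R) :
    (P2Verts p ∩ H).Nonempty := by
  by_contra hne
  have hH : ∀ v ∈ P2Verts p, v ∉ H := fun v hv hvH => hne ⟨v, mem_inter.2 ⟨hv, hvH⟩⟩
  have h1 := hH _ (mem_P2Verts.2 (Or.inl rfl))
  have h2 := hH _ (mem_P2Verts.2 (Or.inr (Or.inl rfl)))
  have h3 := hH _ (mem_P2Verts.2 (Or.inr (Or.inr rfl)))
  obtain ⟨v, hv, hvR⟩ := not_subset.1 hpR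
  have hvC : v ∈ C := ((hc.cover v).resolve_left (hH v hv)).resolve_right hvR
  have hmid : p.2.1 ∈ C := by
    rcases mem_P2Verts.1 hv with rfl | rfl | rfl
    · exact hc.mem_of_adj_of_mem hvC hp.1 h2
    · exact hvC
    · exact hc.mem_of_adj_of_mem hvC hp.2.1.symm h2
  exact hc.not_isP2_of_mem hp (hc.mem_of_adj_of_mem hmid hp.1.symm h1) hmid
    (hc.mem_of_adj_of_mem hmid hp.2.1 h3)

lemma exists_packing_subset_right {P : Finset (V × V × V)} (hP : IsP2Packing G P) :
    ∃ Q, IsP2Packing G Q ∧ (∀ q ∈ Q, P2Verts q ⊆ R) ∧ Q.card = P.card - H.card := by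
  have hout : (P.filter fun p => ¬ P2Verts p ⊆ R).card ≤ H.card :=
    (hP.mono (filter_subset _ _)).card_le_of_forall_inter_nonempty fun p hp =>
      hc.P2Verts_inter_nonempty (hP.1 p (mem_filter.1 hp).1) (mem_filter.1 hp).2
  have hin : P.card - H.card ≤ (P.filter fun p => P2Verts p ⊆ R).card := by
    have := card_filter_add_card_filter_not (s := P) (fun p => P2Verts p ⊆ R)
    omega
  obtain ⟨Q, hQP, hQ, hcard⟩ := (hP.mono (filter_subset _ _)).exists_subset_card_eq hin
  exact ⟨Q, hQ, fun q hq => (mem_filter.1 (hQP hq)).2, hcard⟩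

lemma disjoint_pair_of_not_adj {c c' w w' : V} (hcC : c ∈ C) (hc'C : c' ∈ C) (hwC : w ∈ C)
    (hcw : G.Adj c w) (hc'w' : G.Adj c' w') (hne : c ≠ c') (hnadj : ¬ G.Adj c c') :
    Disjoint ({c, w} : Finset V) {c', w'} := by
  have hww' : w ≠ w' := by
    rintro rfl
    obtain ⟨u, -, -, huniq⟩ := hc.k2s w hwC
    exact hne ((huniq c hcC hcw.symm).trans (huniq c' hc'C hc'w'.symm).symm)
  have hcw' : c ≠ w' := by rintro rfl; exact hnadj hc'w'.symm
  have hwc' : w ≠ c' := by rintro rfl; exact hnadj hcw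
  simp [hne.symm, hww'.symm, hcw'.symm, hwc'.symm]

lemma exists_packing_subset_union :
    ∃ S, IsP2Packing G S ∧ (∀ q ∈ S, P2Verts q ⊆ H ∪ C) ∧ S.card = H.card := by
  obtain ⟨f, hfinj, hf, hfnadj⟩ := hc.matching
  choose! g hgC hg using hc.k2s
  have hgadj (c) (hcC : c ∈ C) : G.Adj c (g c) := (hg c hcC).1
  let pair (h : H) : Finset V := {f h, g (f h)}
  let t (h : H) : V × V × V := (h, f h, g (f h))
  have hpairC (h : H) : pair h ⊆ C := by
    simp [pair, insert_subset_iff, (hf h).1, hgC _ (hf h).1]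
  have hHpair (h h' : H) : (h : V) ∉ pair h' := fun hh => disjoint_left.1 hc.dHC h.2 (hpairC h' hh)
  have htP2 (h : H) : IsP2 G (t h) :=
    ⟨(hf h).2, hgadj _ (hf h).1, fun (e : (h : V) = g (f h)) =>
      disjoint_left.1 hc.dHC h.2 (e ▸ hgC _ (hf h).1)⟩
  have htdisj (h h' : H) (hne : h ≠ h') : Disjoint (P2Verts (t h)) (P2Verts (t h')) := by
    have hpair : Disjoint (pair h) (pair h') :=
      hc.disjoint_pair_of_not_adj (hf h).1 (hf h').1 (hgC _ (hf h).1) (hgadj _ (hf h).1)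
        (hgadj _ (hf h').1) (hfinj.ne hne) (hfnadj h h' hne)
    refine disjoint_insert_left.2 ⟨?_, disjoint_insert_right.2 ⟨hHpair h' h, hpair⟩⟩
    exact fun hh => (mem_insert.1 hh).elim (fun e => hne (Subtype.ext e)) (hHpair h h')
  refine ⟨H.attach.image t, isP2Packing_image (fun h _ => htP2 h) fun h _ h' _ => htdisj h h',
    forall_mem_image.2 fun h _ => ?_, ?_⟩
  · exact insert_subset (mem_union_left _ h.2) ((hpairC h).trans subset_union_right)
  · rw [card_image_of_injective _ fun h h' e => Subtype.ext (congrArg Prod.fst e), card_attach]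

end IsFatCrown

end

/-- Lemma 2: with a fat crown (H,C,R), G has a P2-packing of size k iff
G - H - C (the induced subgraph on R) has one of size k - |H|. -/
theorem stmt4 {V : Type*} [DecidableEq V] (G : SimpleGraph V)
    (H C R : Finset V) (k : ℕ) (hcrown : IsFatCrown G H C R) :
    (∃ P : Finset (V × V × V), IsP2Packing G P ∧ P.card = k) ↔
    (∃ P : Finset (V × V × V), IsP2Packing G P ∧ (∀ p ∈ P, P2Verts p ⊆ R) ∧
      P.card = k - H.card) := by
  constructor
  · rintro ⟨P, hP, rfl⟩
    exact hcrown.exists_packing_subset_right hP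
  · rintro ⟨P, hP, hPR, hcard⟩
    obtain ⟨S, hS, hSHC, hScard⟩ := hcrown.exists_packing_subset_union
    have hRHC : Disjoint R (H ∪ C) := disjoint_union_right.2 ⟨hcrown.dHR.symm, hcrown.dCR.symm⟩
    have hPS : ∀ p ∈ P, ∀ q ∈ S, Disjoint (P2Verts p) (P2Verts q) := fun p hp q hq =>
      hRHC.mono (hPR p hp) (hSHC q hq)
    obtain ⟨Q, -, hQ, hQcard⟩ := (hP.union hS hPS).exists_subset_card_eq (k := k) (by
      rw [card_union_of_disjoint (disjoint_of_forall_disjoint_P2Verts hPS)]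
      omega)
    exact ⟨Q, hQ, hQcard⟩
end

section
/- Let P be a maximal P2-packing of a graph G and let Q be a P2-packing with |Q| = |P| + 1 maximizing the number of paths shared with P. Then for every p ∈ P that is not (as an edge set) a member of Q, there exist two distinct paths q₁, q₂ ∈ Q with |V(p) ∩ V(qᵢ)| ≥ 1 for i = 1, 2. -/
open Finset

/-- The number of paths of Q whose edge set equals the edge set of some path of P. -/
def sharedPathCount {V : Type*} [DecidableEq V] (P Q : Finset (V × V × V)) : ℕ :=
  (Q.filter (fun q => ∃ p ∈ P, P2Edges p = P2Edges q)).card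

/-! If at most one path of `Q` met an unshared `p ∈ P`, then some path `q₀ ∈ Q` not shared with
`P` would be the only one meeting `p`: either nothing meets `p` and `q₀` exists because at most
`|P| < |Q|` paths of `Q` are shared, or the unique path meeting `p` is unshared, since a path of `P`
with the same edges would meet `p` and hence be `p`. Replacing `q₀` by `p` then gives a packing of
the same size sharing one more path with `P`, contradicting the choice of `Q`. -/

section P2Packing

variable {V : Type*} [DecidableEq V]

lemma mem_P2Verts_iff_exists_mem_P2Edges (p : V × V × V) (x : V) :
    x ∈ P2Verts p ↔ ∃ e ∈ P2Edges p, x ∈ e := by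
  obtain ⟨a, b, c⟩ := p
  simp only [P2Verts, P2Edges, mem_insert, mem_singleton, exists_eq_or_imp, exists_eq_left,
    Sym2.mem_iff]
  tauto

lemma P2Verts_eq_of_P2Edges_eq {p q : V × V × V} (h : P2Edges p = P2Edges q) :
    P2Verts p = P2Verts q := by
  ext x
  rw [mem_P2Verts_iff_exists_mem_P2Edges, mem_P2Verts_iff_exists_mem_P2Edges, h]

lemma P2Verts_nonempty (p : V × V × V) : (P2Verts p).Nonempty :=
  insert_nonempty _ _

variable {G : SimpleGraph V} {P Q : Finset (V × V × V)}

lemma IsP2Packing.eq_of_not_disjoint (hQ : IsP2Packing G Q) {p q : V × V × V}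
    (hp : p ∈ Q) (hq : q ∈ Q) (h : ¬Disjoint (P2Verts p) (P2Verts q)) : p = q := by
  by_contra hpq
  exact h (hQ.2 p hp q hq hpq)

lemma IsP2Packing.injOn_P2Edges (hQ : IsP2Packing G Q) :
    Set.InjOn P2Edges (Q : Set (V × V × V)) := by
  intro p hp q hq h
  refine hQ.eq_of_not_disjoint hp hq ?_
  rw [P2Verts_eq_of_P2Edges_eq h, disjoint_self_iff_empty]
  exact (P2Verts_nonempty q).ne_empty

lemma IsP2Packing.insert_erase (hQ : IsP2Packing G Q) {p q₀ : V × V × V} (hp : IsP2 G p)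
    (hdisj : ∀ q ∈ Q, q ≠ q₀ → Disjoint (P2Verts p) (P2Verts q)) :
    IsP2Packing G (insert p (Q.erase q₀)) := by
  have hdisj' : ∀ q ∈ Q.erase q₀, Disjoint (P2Verts p) (P2Verts q) := fun q hq =>
    hdisj q (mem_of_mem_erase hq) (ne_of_mem_erase hq)
  refine ⟨fun x hx => ?_, fun x hx y hy hxy => ?_⟩
  · rcases mem_insert.mp hx with rfl | hx
    exacts [hp, hQ.1 x (mem_of_mem_erase hx)]
  · rcases mem_insert.mp hx with rfl | hxQ <;> rcases mem_insert.mp hy with rfl | hyQ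
    · exact absurd rfl hxy
    · exact hdisj' y hyQ
    · exact (hdisj' x hxQ).symm
    · exact hQ.2 x (mem_of_mem_erase hxQ) y (mem_of_mem_erase hyQ) hxy

lemma sharedPathCount_le_card (P : Finset (V × V × V)) (hQ : IsP2Packing G Q) :
    sharedPathCount P Q ≤ P.card :=
  calc sharedPathCount P Q
      = ((Q.filter fun q => ∃ p ∈ P, P2Edges p = P2Edges q).image P2Edges).card :=
        (card_image_of_injOn (hQ.injOn_P2Edges.mono (coe_subset.mpr (filter_subset _ Q)))).symm
    _ ≤ (P.image P2Edges).card := card_le_card (by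
        simp only [subset_iff, mem_image, mem_filter]
        rintro _ ⟨q, ⟨-, p, hp, hpq⟩, rfl⟩
        exact ⟨p, hp, hpq⟩)
    _ ≤ P.card := card_image_le

lemma sharedPathCount_insert_erase {p q₀ : V × V × V} (hp : p ∈ P) (hpQ : p ∉ Q)
    (hq₀ : ¬∃ p' ∈ P, P2Edges p' = P2Edges q₀) :
    sharedPathCount P (insert p (Q.erase q₀)) = sharedPathCount P Q + 1 := by
  have hq₀' : q₀ ∉ Q.filter fun q => ∃ p' ∈ P, P2Edges p' = P2Edges q :=
    fun h => hq₀ (mem_filter.mp h).2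
  have hp' : p ∉ Q.filter fun q => ∃ p' ∈ P, P2Edges p' = P2Edges q :=
    fun h => hpQ (mem_filter.mp h).1
  unfold sharedPathCount
  rw [filter_insert _ p, if_pos ⟨p, hp, rfl⟩, filter_erase _ q₀, erase_eq_of_notMem hq₀',
    card_insert_of_notMem hp']

lemma exists_unshared_of_card_meeting_le_one (hP : IsP2Packing G P) (hQ : IsP2Packing G Q)
    (hcard : P.card < Q.card) {p : V × V × V} (hp : p ∈ P)
    (hne : ∀ q ∈ Q, P2Edges q ≠ P2Edges p)
    (hle : (Q.filter fun q => ¬Disjoint (P2Verts p) (P2Verts q)).card ≤ 1) :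
    ∃ q₀ ∈ Q, (¬∃ p' ∈ P, P2Edges p' = P2Edges q₀) ∧
      ∀ q ∈ Q, q ≠ q₀ → Disjoint (P2Verts p) (P2Verts q) := by
  rcases (Q.filter fun q => ¬Disjoint (P2Verts p) (P2Verts q)).eq_empty_or_nonempty
    with hnone | ⟨q₀, hq₀⟩
  · obtain ⟨q₀, hq₀, hunshared⟩ := exists_mem_notMem_of_card_lt_card
      ((sharedPathCount_le_card P hQ).trans_lt hcard)
    refine ⟨q₀, hq₀, fun h => hunshared (mem_filter.mpr ⟨hq₀, h⟩), fun q hq _ => ?_⟩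
    by_contra hmeet
    exact notMem_empty q (hnone ▸ mem_filter.mpr ⟨hq, hmeet⟩)
  · obtain ⟨hq₀Q, hmeet⟩ := mem_filter.mp hq₀
    refine ⟨q₀, hq₀Q, ?_, fun q hq hqq₀ => ?_⟩
    · rintro ⟨p', hp', hpq⟩
      have : p = p' := hP.eq_of_not_disjoint hp hp' (P2Verts_eq_of_P2Edges_eq hpq ▸ hmeet)
      exact hne q₀ hq₀Q (this ▸ hpq).symm
    · by_contra hqmeet
      exact hqq₀ (card_le_one.mp hle q (mem_filter.mpr ⟨hq, hqmeet⟩) q₀ hq₀)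

end P2Packing

/-- Corollary: for every p ∈ P not reused (as an edge set) by Q, two distinct
paths of Q intersect p. -/
theorem stmt8 {V : Type*} [DecidableEq V] (G : SimpleGraph V)
    (P Q : Finset (V × V × V))
    (hP : IsMaximalP2Packing G P)
    (hQ : IsP2Packing G Q) (hcard : Q.card = P.card + 1)
    (hmax : ∀ Q' : Finset (V × V × V), IsP2Packing G Q' → Q'.card = P.card + 1 →
      sharedPathCount P Q' ≤ sharedPathCount P Q) :
    ∀ p ∈ P, (∀ q ∈ Q, P2Edges q ≠ P2Edges p) →
      ∃ q₁ ∈ Q, ∃ q₂ ∈ Q, q₁ ≠ q₂ ∧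
        1 ≤ (P2Verts p ∩ P2Verts q₁).card ∧
        1 ≤ (P2Verts p ∩ P2Verts q₂).card := by
  intro p hp hne
  suffices h : 1 < (Q.filter fun q => ¬Disjoint (P2Verts p) (P2Verts q)).card by
    obtain ⟨q₁, h₁, q₂, h₂, h₁₂⟩ := one_lt_card.mp h
    simp only [mem_filter, not_disjoint_iff_nonempty_inter, ← one_le_card] at h₁ h₂
    exact ⟨q₁, h₁.1, q₂, h₂.1, h₁₂, h₁.2, h₂.2⟩
  by_contra! hle
  obtain ⟨q₀, hq₀, hunshared, havoid⟩ :=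
    exists_unshared_of_card_meeting_le_one hP.1 hQ (by omega) hp hne hle
  have hpQ : p ∉ Q := fun h => hne p h rfl
  have hswap := hmax _ (hQ.insert_erase (hP.1.1 p hp) havoid)
    (by rw [card_insert_of_notMem (fun h => hpQ (mem_of_mem_erase h)), card_erase_of_mem hq₀,
      hcard]; omega)
  rw [sharedPathCount_insert_erase hp hpQ hunshared] at hswap
  omega
end
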